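/- With B = k[a,x,y,z,v] and D defined by z→y→x→a³, v→a², a→0, set A = ker D. The six elements σ₀ = a, σ₁ = av − x, 2!σ₂ = av² − 2xv + 2a²y, 3!σ₃ = av³ − 3xv² + 6a²yv − 6a⁴z, 4!σ₄ = av⁴ − 4xv³ + 12a²yv² − 24a⁴zv + 24a³xz − 12a³y², 5!σ₅ = av⁵ − 5xv⁴ + 20a²yv³ − 60a⁴zv² + 120a³xzv − 60a³y²v − 72x²a²z + 36xa²y² + 24a⁵yz all lie in A, and ∂σₙ/∂v = σ_{n-1} for 1 ≤ n ≤ 5. -/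

import Mathlib

open MvPolynomial

/-- The derivation `D` of `B = k[a,x,y,z,v]` with `Dz = y`, `Dy = x`, `Dx = a³`, `Dv = a²`,
`Da = 0` (variables `a = X 0`, `x = X 1`, `y = X 2`, `z = X 3`, `v = X 4`). -/
noncomputable def dimFiveDer (k : Type*) [Field k] [CharZero k] :
    Derivation k (MvPolynomial (Fin 5) k) (MvPolynomial (Fin 5) k) :=
  MvPolynomial.mkDerivation k ![0, X 0 ^ 3, X 1, X 2, X 0 ^ 2]

/-- `σ₀ = a`. -/
noncomputable def sigma0 (k : Type*) [Field k] [CharZero k] : MvPolynomial (Fin 5) k := X 0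

/-- `σ₁ = av − x`. -/
noncomputable def sigma1 (k : Type*) [Field k] [CharZero k] : MvPolynomial (Fin 5) k :=
  X 0 * X 4 - X 1

/-- `σ₂ = (1/2)(av² − 2xv + 2a²y)`. -/
noncomputable def sigma2 (k : Type*) [Field k] [CharZero k] : MvPolynomial (Fin 5) k :=
  C ((2 : k)⁻¹) * (X 0 * X 4 ^ 2 - 2 * X 1 * X 4 + 2 * X 0 ^ 2 * X 2)

/-- `σ₃ = (1/6)(av³ − 3xv² + 6a²yv − 6a⁴z)`. -/
noncomputable def sigma3 (k : Type*) [Field k] [CharZero k] : MvPolynomial (Fin 5) k :=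
  C ((6 : k)⁻¹) *
    (X 0 * X 4 ^ 3 - 3 * X 1 * X 4 ^ 2 + 6 * X 0 ^ 2 * X 2 * X 4 - 6 * X 0 ^ 4 * X 3)

/-- `σ₄ = (1/24)(av⁴ − 4xv³ + 12a²yv² − 24a⁴zv + 24a³xz − 12a³y²)`. -/
noncomputable def sigma4 (k : Type*) [Field k] [CharZero k] : MvPolynomial (Fin 5) k :=
  C ((24 : k)⁻¹) *
    (X 0 * X 4 ^ 4 - 4 * X 1 * X 4 ^ 3 + 12 * X 0 ^ 2 * X 2 * X 4 ^ 2 -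
      24 * X 0 ^ 4 * X 3 * X 4 + 24 * X 0 ^ 3 * X 1 * X 3 - 12 * X 0 ^ 3 * X 2 ^ 2)

/-- `σ₅ = (1/120)(av⁵ − 5xv⁴ + 20a²yv³ − 60a⁴zv² + 120a³xzv − 60a³y²v − 72x²a²z + 36xa²y²
+ 24a⁵yz)`. -/
noncomputable def sigma5 (k : Type*) [Field k] [CharZero k] : MvPolynomial (Fin 5) k :=
  C ((120 : k)⁻¹) *
    (X 0 * X 4 ^ 5 - 5 * X 1 * X 4 ^ 4 + 20 * X 0 ^ 2 * X 2 * X 4 ^ 3 -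
      60 * X 0 ^ 4 * X 3 * X 4 ^ 2 + 120 * X 0 ^ 3 * X 1 * X 3 * X 4 -
      60 * X 0 ^ 3 * X 2 ^ 2 * X 4 - 72 * X 1 ^ 2 * X 0 ^ 2 * X 3 +
      36 * X 1 * X 0 ^ 2 * X 2 ^ 2 + 24 * X 0 ^ 5 * X 2 * X 3)

theorem Derivation.map_ofNat {R A M : Type*} [CommSemiring R] [CommSemiring A] [AddCommMonoid M]
    [Algebra R A] [Module A M] [Module R M] (D : Derivation R A M) (n : ℕ) [n.AtLeastTwo] :
    D ofNat(n) = 0 :=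
  D.map_natCast n

section
variable {k : Type*} [Field k] [CharZero k]

@[simp] lemma dimFiveDer_X_zero : dimFiveDer k (X 0) = 0 := mkDerivation_X _ _ _
@[simp] lemma dimFiveDer_X_one : dimFiveDer k (X 1) = X 0 ^ 3 := mkDerivation_X _ _ _
@[simp] lemma dimFiveDer_X_two : dimFiveDer k (X 2) = X 1 := mkDerivation_X _ _ _
@[simp] lemma dimFiveDer_X_three : dimFiveDer k (X 3) = X 2 := mkDerivation_X _ _ _
@[simp] lemma dimFiveDer_X_four : dimFiveDer k (X 4) = X 0 ^ 2 := mkDerivation_X _ _ _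

lemma dimFiveDer_sigma_eq_zero :
    dimFiveDer k (sigma1 k) = 0 ∧ dimFiveDer k (sigma2 k) = 0 ∧ dimFiveDer k (sigma3 k) = 0 ∧
      dimFiveDer k (sigma4 k) = 0 ∧ dimFiveDer k (sigma5 k) = 0 := by
  refine ⟨?_, ?_, ?_, ?_, ?_⟩ <;>
  · simp only [sigma1, sigma2, sigma3, sigma4, sigma5, map_add, map_sub, Derivation.leibniz,
      Derivation.leibniz_pow, Derivation.map_ofNat, derivation_C, dimFiveDer_X_zero,
      dimFiveDer_X_one, dimFiveDer_X_two, dimFiveDer_X_three, dimFiveDer_X_four, smul_eq_mul,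
      nsmul_eq_mul]
    ring

lemma pderiv_four_sigma1 : pderiv 4 (sigma1 k) = sigma0 k := by
  simp only [sigma1, sigma0, map_sub, Derivation.leibniz, pderiv_X, Pi.single_apply, Fin.reduceEq,
    ↓reduceIte, smul_eq_mul]
  ring

-- `ring` treats `C c` as an atom, so the scalars `1/n!` of consecutive `σₙ` are related by hand.
lemma pderiv_four_sigma2 : pderiv 4 (sigma2 k) = sigma1 k := by
  simp only [sigma2, sigma1, map_add, map_sub, Derivation.leibniz, Derivation.leibniz_pow,
    Derivation.map_ofNat, derivation_C, pderiv_X, Pi.single_apply, Fin.reduceEq, ↓reduceIte,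
    smul_eq_mul, nsmul_eq_mul]
  have h : (C 2⁻¹ : MvPolynomial (Fin 5) k) * 2 = 1 := by
    rw [← map_ofNat C 2, ← C_mul, inv_mul_cancel₀ two_ne_zero, C_1]
  linear_combination (X 0 * X 4 - X 1) * h

lemma pderiv_four_sigma3 : pderiv 4 (sigma3 k) = sigma2 k := by
  rw [sigma2, show (2⁻¹ : k) = 6⁻¹ * 3 by norm_num, C_mul, map_ofNat]
  simp only [sigma3, map_add, map_sub, Derivation.leibniz, Derivation.leibniz_pow,
    Derivation.map_ofNat, derivation_C, pderiv_X, Pi.single_apply, Fin.reduceEq, ↓reduceIte,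
    smul_eq_mul, nsmul_eq_mul]
  ring

lemma pderiv_four_sigma4 : pderiv 4 (sigma4 k) = sigma3 k := by
  rw [sigma3, show (6⁻¹ : k) = 24⁻¹ * 4 by norm_num, C_mul, map_ofNat]
  simp only [sigma4, map_add, map_sub, Derivation.leibniz, Derivation.leibniz_pow,
    Derivation.map_ofNat, derivation_C, pderiv_X, Pi.single_apply, Fin.reduceEq, ↓reduceIte,
    smul_eq_mul, nsmul_eq_mul]
  ring

lemma pderiv_four_sigma5 : pderiv 4 (sigma5 k) = sigma4 k := by
  rw [sigma4, show (24⁻¹ : k) = 120⁻¹ * 5 by norm_num, C_mul, map_ofNat]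
  simp only [sigma5, map_add, map_sub, Derivation.leibniz, Derivation.leibniz_pow,
    Derivation.map_ofNat, derivation_C, pderiv_X, Pi.single_apply, Fin.reduceEq, ↓reduceIte,
    smul_eq_mul, nsmul_eq_mul]
  ring

end

/-- The elements `σ₀, ..., σ₅` all lie in `A = ker D`, and `∂σₙ/∂v = σ_{n-1}` for
`1 ≤ n ≤ 5`. -/
theorem sigma_in_kernel_and_cable (k : Type*) [Field k] [CharZero k] :
    dimFiveDer k (sigma0 k) = 0 ∧ dimFiveDer k (sigma1 k) = 0 ∧
    dimFiveDer k (sigma2 k) = 0 ∧ dimFiveDer k (sigma3 k) = 0 ∧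
    dimFiveDer k (sigma4 k) = 0 ∧ dimFiveDer k (sigma5 k) = 0 ∧
    pderiv (4 : Fin 5) (sigma1 k) = sigma0 k ∧
    pderiv (4 : Fin 5) (sigma2 k) = sigma1 k ∧
    pderiv (4 : Fin 5) (sigma3 k) = sigma2 k ∧
    pderiv (4 : Fin 5) (sigma4 k) = sigma3 k ∧
    pderiv (4 : Fin 5) (sigma5 k) = sigma4 k := by
  obtain ⟨h1, h2, h3, h4, h5⟩ := dimFiveDer_sigma_eq_zero (k := k)
  exact ⟨dimFiveDer_X_zero, h1, h2, h3, h4, h5, pderiv_four_sigma1, pderiv_four_sigma2,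
    pderiv_four_sigma3, pderiv_four_sigma4, pderiv_four_sigma5⟩
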